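/- Let p be a prime and suppose the function G_p attains its minimum on [1/p, 1] at a point ŝ. Define n_k := ⌊p^k ŝ⌋ for integers k ≥ 1. Then lim_{k→∞} F_p(n_k)/n_k^{ρ_p} = G_p(ŝ) = β_p. -/

import Mathlib

open Finset

/-- `Fcount p n` = number of binomial coefficients `C(m,k)`, `0 ≤ k ≤ m < n`,
not divisible by `p`. -/
def Fcount (p n : ℕ) : ℕ :=
  ((Finset.range n ×ˢ Finset.range n).filter
    (fun mk => mk.2 ≤ mk.1 ∧ ¬ (p ∣ Nat.choose mk.1 mk.2))).card

/-- `A_p = C(p+1,2) = p(p+1)/2`. -/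
noncomputable def Ap (p : ℕ) : ℝ := p * (p + 1) / 2

/-- `ρ_p = log_p A_p`. -/
noncomputable def rhoP (p : ℕ) : ℝ := Real.log (Ap p) / Real.log p

/-- `bdig p x j` is the `j`-th base-`p` digit (`j ≥ 1`) of `x ∈ [0,1)`:
`⌊p^j x⌋ − p ⌊p^{j-1} x⌋`. -/
noncomputable def bdig (p : ℕ) (x : ℝ) (j : ℕ) : ℤ :=
  ⌊(p : ℝ) ^ j * x⌋ - p * ⌊(p : ℝ) ^ (j - 1) * x⌋

/-- `φ_p(x) = (1/2) ∑_{j≥1} A_p^{-j} b_j(x) ∏_{i=1}^{j} (b_i(x)+1)` for `x ∈ [0,1)`,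
with `φ_p(1) = 1`. -/
noncomputable def phiP (p : ℕ) (x : ℝ) : ℝ :=
  if x = 1 then 1 else
    (1 / 2) * ∑' j : ℕ,
      ((bdig p x (j + 1) : ℝ) * ∏ i ∈ Finset.range (j + 1), ((bdig p x (i + 1) : ℝ) + 1))
        / (Ap p) ^ (j + 1)

/-- `G_p(s) = s^{-ρ_p} φ_p(s)`. -/
noncomputable def Gp (p : ℕ) (s : ℝ) : ℝ := s ^ (-(rhoP p)) * phiP p s

/-- `β_p = liminf_{n→∞} F_p(n) / n^{ρ_p}`. -/
noncomputable def betaP (p : ℕ) : ℝ :=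
  Filter.atTop.liminf (fun n : ℕ => (Fcount p n : ℝ) / (n : ℝ) ^ (rhoP p))

/-!
Let `R_p(m)` be the number of entries of row `m` of Pascal's triangle prime to `p`. By Lucas'
theorem `R_p(p q + r) = (r + 1) R_p(q)` for a digit `r < p`, and summing over rows gives
`F_p(p q + r) = A_p F_p(q) + C(r + 1, 2) R_p(q)`. Unrolled along `n_k = ⌊p^k x⌋`, this says that
`F_p(n_k) / A_p^k` is the `k`-th partial sum of the series of `φ_p(x)`; since
`n_k^{ρ_p} = A_p^k (n_k / p^k)^{ρ_p}` and `n_k / p^k → x`, the ratio `F_p(n_k) / n_k^{ρ_p}`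
tends to `G_p(x)`.

The ratio is unchanged under `n ↦ p n`, so for `x = n / p^{⌊log_p n⌋ + 1} ∈ [1/p, 1)` the
sequence `F_p(n_k) / n_k^{ρ_p}` is eventually constant equal to `F_p(n) / n^{ρ_p}`, which is
therefore `G_p(x) ≥ G_p(ŝ)`. So `G_p(ŝ)` bounds every ratio from below and is the limit along
`⌊p^k ŝ⌋`, hence it is the `liminf`.
-/

open Filter Topology

def rowCount (p m : ℕ) : ℕ := #{k ∈ range (m + 1) | ¬ p ∣ m.choose k}

lemma Nat.Prime.dvd_choose_iff_lt {p r b : ℕ} (hp : p.Prime) (hr : r < p) :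
    p ∣ r.choose b ↔ r < b := by
  refine ⟨fun h => not_le.mp fun hb => ?_, fun h => by simp [Nat.choose_eq_zero_of_lt h]⟩
  rw [hp.dvd_iff_one_le_factorization (Nat.choose_pos hb).ne',
    Nat.factorization_choose_eq_zero_of_lt hr] at h
  omega

lemma Nat.Prime.dvd_choose_mul_add_iff {p q r : ℕ} (hp : p.Prime) (hr : r < p) (k : ℕ) :
    p ∣ (p * q + r).choose k ↔ p ∣ q.choose (k / p) ∨ r < k % p := by
  have := Fact.mk hp
  have hmod : (p * q + r) % p = r := by simp [Nat.mod_eq_of_lt hr]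
  have hdiv : (p * q + r) / p = q := by rw [Nat.mul_add_div hp.pos, Nat.div_eq_of_lt hr, add_zero]
  rw [(Choose.choose_modEq_choose_mod_mul_choose_div_nat (p := p)).dvd_iff dvd_rfl, hmod, hdiv,
    hp.dvd_mul, hp.dvd_choose_iff_lt hr, or_comm]

lemma rowCount_mul_add {p q r : ℕ} (hp : p.Prime) (hr : r < p) :
    rowCount p (p * q + r) = (r + 1) * rowCount p q := by
  have hdiv : ∀ a b, b < p → (p * a + b) / p = a := fun a b hb => by
    rw [Nat.mul_add_div hp.pos, Nat.div_eq_of_lt hb, add_zero]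
  have hmod : ∀ a b, b < p → (p * a + b) % p = b := fun a b hb => by
    simp [Nat.mod_eq_of_lt hb]
  have hle : ∀ a, ¬ p ∣ q.choose a → a ≤ q := fun a ha =>
    not_lt.mp fun h => ha (by simp [Nat.choose_eq_zero_of_lt h])
  rw [rowCount, rowCount, ← card_range (r + 1), ← card_product]
  refine card_nbij' (fun k => (k % p, k / p)) (fun ab => p * ab.2 + ab.1) ?_ ?_ ?_ ?_
  · intro k hk
    simp only [coe_filter, coe_product, Set.mem_prod, Set.mem_ofPred_eq, coe_range, Set.mem_Iio,
      mem_range, hp.dvd_choose_mul_add_iff hr, not_or, not_lt] at hk ⊢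
    exact ⟨by omega, by have := hle _ hk.2.1; omega, hk.2.1⟩
  · rintro ⟨b, a⟩ hab
    simp only [coe_filter, coe_product, Set.mem_prod, Set.mem_ofPred_eq, coe_range, Set.mem_Iio,
      mem_range, hp.dvd_choose_mul_add_iff hr, not_or, not_lt] at hab ⊢
    rw [hdiv a b (by omega), hmod a b (by omega)]
    refine ⟨?_, hab.2.2, by omega⟩
    have := Nat.mul_le_mul_left p (hle _ hab.2.2)
    omega
  · intro k _
    exact Nat.div_add_mod k p
  · rintro ⟨b, a⟩ hab
    simp only [coe_product, Set.mem_prod, coe_range, Set.mem_Iio] at hab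
    simp [hdiv a b (by omega), hmod a b (by omega)]

lemma Fcount_eq_sum_rowCount (p n : ℕ) : Fcount p n = ∑ m ∈ range n, rowCount p m := by
  rw [Fcount, card_filter, sum_product]
  refine sum_congr rfl fun m hm => ?_
  rw [← card_filter, rowCount]
  congr 1
  ext k
  simp only [mem_filter, mem_range] at hm ⊢
  constructor
  · rintro ⟨hk, hkm, h⟩; exact ⟨by omega, h⟩
  · rintro ⟨hk, h⟩; exact ⟨by omega, by omega, h⟩

lemma Fcount_succ (p n : ℕ) : Fcount p (n + 1) = Fcount p n + rowCount p n := by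
  simp only [Fcount_eq_sum_rowCount, sum_range_succ]

lemma sum_range_add_one_eq_choose_two (r : ℕ) : ∑ i ∈ range r, (i + 1) = (r + 1).choose 2 := by
  induction r with
  | zero => rfl
  | succ r ih =>
    rw [sum_range_succ, ih, Nat.choose_succ_succ' (r + 1), Nat.choose_one_right, add_comm]

lemma sum_range_rowCount_mul_add {p q r : ℕ} (hp : p.Prime) (hr : r ≤ p) :
    ∑ b ∈ range r, rowCount p (p * q + b) = (r + 1).choose 2 * rowCount p q := by
  rw [sum_congr rfl fun b hb => rowCount_mul_add hp ((mem_range.mp hb).trans_le hr), ← sum_mul,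
    sum_range_add_one_eq_choose_two]

lemma Fcount_mul {p : ℕ} (hp : p.Prime) (q : ℕ) :
    Fcount p (p * q) = (p + 1).choose 2 * Fcount p q := by
  induction q with
  | zero => simp [Fcount_eq_sum_rowCount]
  | succ q ih =>
    rw [mul_add_one, Fcount_eq_sum_rowCount, sum_range_add, ← Fcount_eq_sum_rowCount, ih,
      sum_range_rowCount_mul_add hp le_rfl, Fcount_succ, mul_add]

lemma Fcount_mul_add {p q r : ℕ} (hp : p.Prime) (hr : r ≤ p) :
    Fcount p (p * q + r) = (p + 1).choose 2 * Fcount p q + (r + 1).choose 2 * rowCount p q := by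
  rw [Fcount_eq_sum_rowCount, sum_range_add, ← Fcount_eq_sum_rowCount, Fcount_mul hp,
    sum_range_rowCount_mul_add hp hr]

/-- `digit p x j` is the digit `b_{j+1}(x)` of the paper (see `bdig_succ`). -/
noncomputable def digit (p : ℕ) (x : ℝ) (j : ℕ) : ℕ := ⌊(p : ℝ) ^ (j + 1) * x⌋₊ % p

lemma digit_lt {p : ℕ} (hp : 0 < p) (x : ℝ) (j : ℕ) : digit p x j < p := Nat.mod_lt _ hp

lemma floor_pow_succ_mul {p : ℕ} (hp : 0 < p) (x : ℝ) (j : ℕ) :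
    ⌊(p : ℝ) ^ (j + 1) * x⌋₊ = p * ⌊(p : ℝ) ^ j * x⌋₊ + digit p x j := by
  have hdiv : (p : ℝ) ^ j * x = (p : ℝ) ^ (j + 1) * x / p := by
    field_simp
    ring
  rw [hdiv, Nat.floor_div_natCast, digit, Nat.div_add_mod]

lemma bdig_succ {p : ℕ} (hp : 0 < p) {x : ℝ} (hx : 0 ≤ x) (j : ℕ) :
    bdig p x (j + 1) = digit p x j := by
  rw [bdig, Nat.add_sub_cancel, ← Int.natCast_floor_eq_floor (by positivity),
    ← Int.natCast_floor_eq_floor (by positivity), floor_pow_succ_mul hp]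
  push_cast
  ring

lemma Ap_eq_choose (p : ℕ) : Ap p = ((p + 1).choose 2 : ℕ) := by
  rw [Nat.cast_choose_two, Ap]
  push_cast
  ring

lemma lt_Ap {p : ℕ} (hp : 1 < p) : (p : ℝ) < Ap p := by
  have : (1 : ℝ) < p := by exact_mod_cast hp
  rw [Ap]
  nlinarith

lemma Ap_pos {p : ℕ} (hp : 1 < p) : 0 < Ap p :=
  (Nat.cast_nonneg p).trans_lt (lt_Ap hp)

/-- The `j`-th term of the series of `φ_p(x)`; `C(b + 1, 2) = b (b + 1) / 2` absorbs its `1/2`. -/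
noncomputable def phiTerm (p : ℕ) (x : ℝ) (j : ℕ) : ℝ :=
  ((digit p x j + 1).choose 2 : ℝ) * (∏ i ∈ range j, ((digit p x i : ℝ) + 1)) / Ap p ^ (j + 1)

lemma phiP_eq_tsum_phiTerm {p : ℕ} (hp : 0 < p) {x : ℝ} (hx0 : 0 ≤ x) (hx1 : x < 1) :
    phiP p x = ∑' j, phiTerm p x j := by
  rw [phiP, if_neg hx1.ne, ← tsum_mul_left]
  congr 1
  funext j
  simp only [bdig_succ hp hx0, prod_range_succ, phiTerm, Nat.cast_choose_two]
  push_cast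
  ring

lemma phiTerm_le {p : ℕ} (hp : 1 < p) (x : ℝ) (j : ℕ) :
    phiTerm p x j ≤ ((p : ℝ) / Ap p) ^ j := by
  have hA := Ap_pos hp
  have hchoose : ((digit p x j + 1).choose 2 : ℝ) ≤ Ap p := by
    rw [Ap_eq_choose]
    exact_mod_cast Nat.choose_le_choose 2 (Nat.succ_le_succ (digit_lt (by omega) x j).le)
  have hprod : ∏ i ∈ range j, ((digit p x i : ℝ) + 1) ≤ (p : ℝ) ^ j := by
    refine (prod_le_prod (fun i _ => by positivity) fun i _ => ?_).trans_eq
      (by rw [prod_const, card_range])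
    exact_mod_cast digit_lt (by omega) x i
  calc phiTerm p x j ≤ Ap p * (p : ℝ) ^ j / Ap p ^ (j + 1) := by
        unfold phiTerm
        gcongr
    _ = ((p : ℝ) / Ap p) ^ j := by
        rw [div_pow, pow_succ]
        field_simp

lemma summable_phiTerm {p : ℕ} (hp : 1 < p) (x : ℝ) : Summable (phiTerm p x) := by
  have hA := Ap_pos hp
  refine .of_nonneg_of_le (fun j => by unfold phiTerm; positivity) (phiTerm_le hp x) ?_
  exact summable_geometric_of_lt_one (by positivity) ((div_lt_one hA).mpr (lt_Ap hp))

lemma rowCount_floor_pow_mul {p : ℕ} (hp : p.Prime) {x : ℝ} (hx : x < 1) (k : ℕ) :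
    rowCount p ⌊(p : ℝ) ^ k * x⌋₊ = ∏ i ∈ range k, (digit p x i + 1) := by
  induction k with
  | zero => simp [Nat.floor_eq_zero.mpr (by simpa using hx), rowCount, filter_singleton, hp.ne_one]
  | succ k ih =>
    rw [floor_pow_succ_mul hp.pos, rowCount_mul_add hp (digit_lt hp.pos x k), ih, prod_range_succ,
      mul_comm]

lemma Fcount_floor_pow_mul {p : ℕ} (hp : p.Prime) {x : ℝ} (hx : x < 1) (k : ℕ) :
    (Fcount p ⌊(p : ℝ) ^ k * x⌋₊ : ℝ) = Ap p ^ k * ∑ j ∈ range k, phiTerm p x j := by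
  induction k with
  | zero => simp [Nat.floor_eq_zero.mpr (by simpa using hx), Fcount]
  | succ k ih =>
    have hA := (Ap_pos hp.one_lt).ne'
    rw [floor_pow_succ_mul hp.pos, Fcount_mul_add hp (digit_lt hp.pos x k).le,
      rowCount_floor_pow_mul hp hx]
    push_cast
    rw [ih, ← Ap_eq_choose, sum_range_succ, phiTerm]
    field_simp
    ring

noncomputable def FcountRatio (p n : ℕ) : ℝ := Fcount p n / (n : ℝ) ^ rhoP p

lemma rpow_rhoP {p : ℕ} (hp : 1 < p) : (p : ℝ) ^ rhoP p = Ap p :=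
  Real.rpow_logb (by positivity) (by exact_mod_cast hp.ne') (Ap_pos hp)

lemma FcountRatio_mul_self {p : ℕ} (hp : p.Prime) (n : ℕ) :
    FcountRatio p (p * n) = FcountRatio p n := by
  rw [FcountRatio, FcountRatio, Fcount_mul hp, Nat.cast_mul, Nat.cast_mul,
    Real.mul_rpow (by positivity) (by positivity), rpow_rhoP hp.one_lt, ← Ap_eq_choose,
    mul_div_mul_left _ _ (Ap_pos hp.one_lt).ne']

lemma FcountRatio_mul_pow {p : ℕ} (hp : p.Prime) (n m : ℕ) :
    FcountRatio p (n * p ^ m) = FcountRatio p n := by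
  induction m with
  | zero => rw [pow_zero, mul_one]
  | succ m ih => rw [pow_succ, ← mul_assoc, mul_comm, FcountRatio_mul_self hp, ih]

lemma FcountRatio_pow {p : ℕ} (hp : p.Prime) (k : ℕ) : FcountRatio p (p ^ k) = 1 := by
  rw [← one_mul (p ^ k), FcountRatio_mul_pow hp]
  simp [FcountRatio, Fcount_eq_sum_rowCount, rowCount, filter_singleton, hp.ne_one]

lemma FcountRatio_floor_pow_mul {p : ℕ} (hp : p.Prime) {x : ℝ} (hx : x < 1) (k : ℕ) :
    FcountRatio p ⌊(p : ℝ) ^ k * x⌋₊ =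
      (∑ j ∈ range k, phiTerm p x j) * ((⌊(p : ℝ) ^ k * x⌋₊ : ℝ) / (p : ℝ) ^ k) ^ (-rhoP p) := by
  have hpk : (0 : ℝ) < (p : ℝ) ^ k := by have := hp.pos; positivity
  set t : ℝ := (⌊(p : ℝ) ^ k * x⌋₊ : ℝ) / (p : ℝ) ^ k
  have hrpow : (⌊(p : ℝ) ^ k * x⌋₊ : ℝ) ^ rhoP p = Ap p ^ k * t ^ rhoP p := by
    rw [← mul_div_cancel₀ (⌊(p : ℝ) ^ k * x⌋₊ : ℝ) hpk.ne', Real.mul_rpow hpk.le (by positivity),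
      ← Real.rpow_pow_comm (Nat.cast_nonneg p), rpow_rhoP hp.one_lt]
  rw [FcountRatio, Fcount_floor_pow_mul hp hx, hrpow,
    mul_div_mul_left _ _ (pow_ne_zero k (Ap_pos hp.one_lt).ne'), Real.rpow_neg (by positivity),
    div_eq_mul_inv]

lemma tendsto_floor_pow_mul_div_pow {p : ℕ} (hp : 1 < p) {x : ℝ} (hx : 0 ≤ x) :
    Tendsto (fun k : ℕ => (⌊(p : ℝ) ^ k * x⌋₊ : ℝ) / (p : ℝ) ^ k) atTop (𝓝 x) := by
  have := (tendsto_nat_floor_mul_div_atTop hx).comp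
    (tendsto_pow_atTop_atTop_of_one_lt (Nat.one_lt_cast.mpr hp))
  simpa only [Function.comp_def, mul_comm x] using this

lemma tendsto_floor_pow_mul_atTop {p : ℕ} (hp : 1 < p) {x : ℝ} (hx : 0 < x) :
    Tendsto (fun k : ℕ => ⌊(p : ℝ) ^ k * x⌋₊) atTop atTop :=
  tendsto_nat_floor_atTop.comp
    ((tendsto_pow_atTop_atTop_of_one_lt (Nat.one_lt_cast.mpr hp)).atTop_mul_const hx)

lemma tendsto_FcountRatio_floor_pow_mul {p : ℕ} (hp : p.Prime) {x : ℝ} (hx0 : 0 < x)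
    (hx1 : x ≤ 1) :
    Tendsto (fun k : ℕ => FcountRatio p ⌊(p : ℝ) ^ k * x⌋₊) atTop (𝓝 (Gp p x)) := by
  rcases hx1.lt_or_eq with hx1 | rfl
  · have hphi : Tendsto (fun k => ∑ j ∈ range k, phiTerm p x j) atTop (𝓝 (phiP p x)) := by
      rw [phiP_eq_tsum_phiTerm hp.pos hx0.le hx1]
      exact (summable_phiTerm hp.one_lt x).hasSum.tendsto_sum_nat
    have hpow := (tendsto_floor_pow_mul_div_pow hp.one_lt hx0.le).rpow_const
      (p := -rhoP p) (Or.inl hx0.ne')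
    rw [Gp, mul_comm]
    simpa only [FcountRatio_floor_pow_mul hp hx1] using hphi.mul hpow
  · have hone : Gp p 1 = 1 := by rw [Gp, Real.one_rpow, one_mul, phiP, if_pos rfl]
    simp only [mul_one, hone]
    refine tendsto_const_nhds.congr fun k => ?_
    rw [← FcountRatio_pow hp k]
    congr
    exact_mod_cast (Nat.floor_natCast (p ^ k)).symm

lemma exists_Gp_eq_FcountRatio {p : ℕ} (hp : p.Prime) {n : ℕ} (hn : n ≠ 0) :
    ∃ x ∈ Set.Icc ((p : ℝ)⁻¹) 1, FcountRatio p n = Gp p x := by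
  have hp0 : (0 : ℝ) < p := by exact_mod_cast hp.pos
  set K := Nat.log p n + 1
  set x : ℝ := n / (p : ℝ) ^ K
  have hx1 : x < 1 := by
    rw [div_lt_one (by positivity)]
    exact_mod_cast Nat.lt_pow_succ_log_self hp.one_lt n
  have hx0 : (p : ℝ)⁻¹ ≤ x := by
    rw [le_div_iff₀ (by positivity), pow_succ, ← mul_assoc, mul_comm, ← mul_assoc,
      mul_inv_cancel₀ hp0.ne', one_mul]
    exact_mod_cast Nat.pow_log_le_self p hn
  have hfloor : ∀ m, ⌊(p : ℝ) ^ (m + K) * x⌋₊ = n * p ^ m := fun m => by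
    rw [pow_add, mul_assoc, mul_div_cancel₀ _ (by positivity), mul_comm]
    exact_mod_cast Nat.floor_natCast (n * p ^ m)
  have hlim := (tendsto_add_atTop_iff_nat K).mpr
    (tendsto_FcountRatio_floor_pow_mul hp ((inv_pos.mpr hp0).trans_le hx0) hx1.le)
  simp only [hfloor, FcountRatio_mul_pow hp] at hlim
  exact ⟨x, ⟨hx0, hx1.le⟩, tendsto_nhds_unique tendsto_const_nhds hlim⟩

lemma liminf_eq_of_eventually_ge_of_tendsto_comp {α ι : Type*} {f : Filter α} {g : Filter ι}
    [g.NeBot] {u : α → ℝ} {v : ι → α} {c : ℝ} (hge : ∀ᶠ a in f, c ≤ u a)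
    (hv : Tendsto v g f) (hlim : Tendsto (u ∘ v) g (𝓝 c)) :
    liminf u f = c := by
  have hbdd : f.IsBoundedUnder (· ≥ ·) u := isBoundedUnder_of_eventually_ge hge
  refine le_antisymm ?_ (le_liminf_of_le ?_ hge)
  · exact (hv.liminf_le_liminf_comp hlim.isCoboundedUnder_ge hbdd).trans_eq hlim.liminf_eq
  · have hle : ∀ᶠ i in g, u (v i) ≤ c + 1 := hlim.eventually (eventually_le_nhds (lt_add_one c))
    exact .of_frequently_le (hv.frequently hle.frequently)

/-- If `G_p` attains its minimum on `[1/p,1]` at `ŝ`, then with `n_k = ⌊p^k ŝ⌋`,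
`F_p(n_k)/n_k^{ρ_p} → G_p(ŝ) = β_p`. -/
theorem tendsto_Fcount_of_min (p : ℕ) (hp : p.Prime) (shat : ℝ)
    (hs : shat ∈ Set.Icc ((p : ℝ)⁻¹) 1)
    (hmin : ∀ t ∈ Set.Icc ((p : ℝ)⁻¹) 1, Gp p shat ≤ Gp p t) :
    Filter.Tendsto
      (fun k : ℕ => (Fcount p ⌊(p : ℝ) ^ k * shat⌋₊ : ℝ) / (⌊(p : ℝ) ^ k * shat⌋₊ : ℝ) ^ rhoP p)
      Filter.atTop (nhds (Gp p shat)) ∧ Gp p shat = betaP p := by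
  have hs0 : 0 < shat := (inv_pos.mpr (Nat.cast_pos.mpr hp.pos)).trans_le hs.1
  have hlim := tendsto_FcountRatio_floor_pow_mul hp hs0 hs.2
  have hge : ∀ᶠ n in atTop, Gp p shat ≤ FcountRatio p n := by
    filter_upwards [eventually_ne_atTop 0] with n hn
    obtain ⟨x, hx, hratio⟩ := exists_Gp_eq_FcountRatio hp hn
    exact hratio ▸ hmin x hx
  exact ⟨hlim, (liminf_eq_of_eventually_ge_of_tendsto_comp hge
    (tendsto_floor_pow_mul_atTop hp.one_lt hs0) hlim).symm⟩
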